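/- arXiv:2111.02181 — 2 statements merged into one kernel-verified Lean document; each statement's English description precedes it below -/
import Mathlib

section
/- Define in ℝ[[u,z]] the bivariate series F_e = Σ_{i≥0} u^{2i}·f_{2i}, F_o = Σ_{i≥0} u^{2i+1}·f_{2i+1}, G_e = Σ_{i≥0} u^{2i}·g_{2i}, G_o = Σ_{i≥0} u^{2i+1}·g_{2i+1} (well defined by the support condition). Then the following four equations hold: u·F_e = βzu²·F_o + αz·F_o + u·(1 + β²z²·f_0); u·F_o = αzu²·F_e + βz·(F_e − f_0) + u²·αβz²·g_0; u·G_e = αzu²·G_o + βz·G_o + u·α²z²·g_0; u·G_o = βzu²·G_e + αz·(G_e − g_0) + u²·αβz²·f_0. -/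
open PowerSeries Filter

noncomputable section

/-- The variable `u`, viewing `ℝ[[u,z]]` as `(ℝ[[z]])[[u]]`. -/
def U : PowerSeries (PowerSeries ℝ) := PowerSeries.X

/-- The variable `z`, viewing `ℝ[[u,z]]` as `(ℝ[[z]])[[u]]`. -/
def Zv : PowerSeries (PowerSeries ℝ) := PowerSeries.C PowerSeries.X

/-- Real constants inside `ℝ[[u,z]]`. -/
def CC (r : ℝ) : PowerSeries (PowerSeries ℝ) := PowerSeries.C (PowerSeries.C r)

/-- The embedding of `ℝ[[z]]` into `ℝ[[u,z]]` as series constant in `u`. -/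
def CP (h : PowerSeries ℝ) : PowerSeries (PowerSeries ℝ) := PowerSeries.C h

/-!
Compared coefficientwise in `u`, each equation is one of the defining recurrences: the coefficient
of `u^(i+1)` is the relation for index `i`, the boundary relations for indices `0` and `1` supply
the low-order terms, and coefficients of the wrong parity vanish on both sides. The families `f`
and `g` obey the same two-periodic recurrence with `α` and `β` exchanged, so it suffices to treat
such a recurrence over an arbitrary commutative ring of coefficients (here `ℝ[[z]]`).
-/

section AlternatingRecurrence

variable {R : Type*} [CommRing R]

def evenSeries (s : ℕ → R) : R⟦X⟧ := mk fun n => if Even n then s n else 0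

def oddSeries (s : ℕ → R) : R⟦X⟧ := mk fun n => if Even n then 0 else s n

@[simp]
theorem coeff_evenSeries (s : ℕ → R) (n : ℕ) :
    coeff n (evenSeries s) = if Even n then s n else 0 :=
  coeff_mk _ _

@[simp]
theorem coeff_oddSeries (s : ℕ → R) (n : ℕ) :
    coeff n (oddSeries s) = if Even n then 0 else s n :=
  coeff_mk _ _

variable {a b c : R} {s : ℕ → R}

theorem X_mul_evenSeries (hrec : ∀ k, s (2 * k + 2) = a * s (2 * k + 1) + b * s (2 * k + 3))
    (h₀ : s 0 = c + b * s 1) :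
    X * evenSeries s = C a * X ^ 2 * oddSeries s + C b * oddSeries s + X * C c := by
  ext (_ | _ | m)
  all_goals simp only [mul_assoc, map_add, coeff_C_mul, coeff_X_pow_mul', coeff_evenSeries,
    coeff_oddSeries, coeff_succ_X_mul, coeff_zero_X_mul, coeff_C]
  · simp
  · simpa [add_comm] using h₀
  · rcases Nat.even_or_odd m with ⟨k, rfl⟩ | ⟨k, rfl⟩
    · simp [parity_simps]
    · simpa [parity_simps, add_assoc] using hrec k

theorem X_mul_oddSeries (hrec : ∀ k, s (2 * k + 3) = b * s (2 * k + 2) + a * s (2 * k + 4))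
    (h₁ : s 1 = b * s 0 + a * s 2 + c) :
    X * oddSeries s =
      C b * X ^ 2 * evenSeries s + C a * (evenSeries s - C (s 0)) + X ^ 2 * C c := by
  ext (_ | _ | _ | m)
  all_goals simp only [mul_assoc, map_add, map_sub, coeff_C_mul, coeff_X_pow_mul',
    coeff_evenSeries, coeff_oddSeries, coeff_succ_X_mul, coeff_zero_X_mul, coeff_C]
  · simp
  · simp
  · simpa using h₁
  · rcases Nat.even_or_odd m with ⟨k, rfl⟩ | ⟨k, rfl⟩
    · simp [parity_simps]
    · simpa [parity_simps, add_assoc] using hrec k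

end AlternatingRecurrence

theorem oneStep_four_equations_general
    (α β : ℝ)
    (f g : ℕ → PowerSeries ℝ)
    (hfe : ∀ k : ℕ, f (2 * k + 2) = C β * X * f (2 * k + 1) + C α * X * f (2 * k + 3))
    (hfo : ∀ k : ℕ, f (2 * k + 3) = C α * X * f (2 * k + 2) + C β * X * f (2 * k + 4))
    (hf1 : f 1 = C α * X * f 0 + C β * X * f 2 + C (α * β) * X ^ 2 * g 0)
    (hf0 : f 0 = 1 + C (β ^ 2) * X ^ 2 * f 0 + C α * X * f 1)
    (hge : ∀ k : ℕ, g (2 * k + 2) = C α * X * g (2 * k + 1) + C β * X * g (2 * k + 3))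
    (hgo : ∀ k : ℕ, g (2 * k + 3) = C β * X * g (2 * k + 2) + C α * X * g (2 * k + 4))
    (hg1 : g 1 = C β * X * g 0 + C α * X * g 2 + C (α * β) * X ^ 2 * f 0)
    (hg0 : g 0 = C (α ^ 2) * X ^ 2 * g 0 + C β * X * g 1) :
    (U * PowerSeries.mk (fun n => if Even n then f n else 0) =
      CC β * Zv * U ^ 2 * PowerSeries.mk (fun n => if Even n then 0 else f n)
        + CC α * Zv * PowerSeries.mk (fun n => if Even n then 0 else f n)
        + U * (1 + CC (β ^ 2) * Zv ^ 2 * CP (f 0))) ∧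
    (U * PowerSeries.mk (fun n => if Even n then 0 else f n) =
      CC α * Zv * U ^ 2 * PowerSeries.mk (fun n => if Even n then f n else 0)
        + CC β * Zv * (PowerSeries.mk (fun n => if Even n then f n else 0) - CP (f 0))
        + U ^ 2 * CC (α * β) * Zv ^ 2 * CP (g 0)) ∧
    (U * PowerSeries.mk (fun n => if Even n then g n else 0) =
      CC α * Zv * U ^ 2 * PowerSeries.mk (fun n => if Even n then 0 else g n)
        + CC β * Zv * PowerSeries.mk (fun n => if Even n then 0 else g n)
        + U * CC (α ^ 2) * Zv ^ 2 * CP (g 0)) ∧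
    (U * PowerSeries.mk (fun n => if Even n then 0 else g n) =
      CC β * Zv * U ^ 2 * PowerSeries.mk (fun n => if Even n then g n else 0)
        + CC α * Zv * (PowerSeries.mk (fun n => if Even n then g n else 0) - CP (g 0))
        + U ^ 2 * CC (α * β) * Zv ^ 2 * CP (f 0)) := by
  have hFe := X_mul_evenSeries hfe hf0
  have hFo := X_mul_oddSeries hfo hf1
  have hGe := X_mul_evenSeries hge hg0
  have hGo := X_mul_oddSeries hgo hg1
  simp only [evenSeries, oddSeries, U, Zv, CC, CP, map_add, map_mul, map_pow, map_one]
    at hFe hFo hGe hGo ⊢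
  exact ⟨by linear_combination hFe, by linear_combination hFo, by linear_combination hGe,
    by linear_combination hGo⟩

/-- The four functional equations satisfied by the even/odd bivariate generating
functions `F_e, F_o, G_e, G_o` of the one-step model. -/
theorem oneStep_four_equations
    (α β : ℝ) (hα0 : 0 < α) (hα1 : α < 1) (hβ : β = 1 - α)
    (f g : ℕ → PowerSeries ℝ) (P Q : PowerSeries ℝ)
    (hfe : ∀ k : ℕ, f (2 * k + 2) = C β * X * f (2 * k + 1) + C α * X * f (2 * k + 3))
    (hfo : ∀ k : ℕ, f (2 * k + 3) = C α * X * f (2 * k + 2) + C β * X * f (2 * k + 4))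
    (hf1 : f 1 = C α * X * f 0 + C β * X * f 2 + C (α * β) * X ^ 2 * g 0)
    (hf0 : f 0 = 1 + C (β ^ 2) * X ^ 2 * f 0 + C α * X * f 1)
    (hP : P = C β * X * f 0)
    (hge : ∀ k : ℕ, g (2 * k + 2) = C α * X * g (2 * k + 1) + C β * X * g (2 * k + 3))
    (hgo : ∀ k : ℕ, g (2 * k + 3) = C β * X * g (2 * k + 2) + C α * X * g (2 * k + 4))
    (hg1 : g 1 = C β * X * g 0 + C α * X * g 2 + C (α * β) * X ^ 2 * f 0)
    (hg0 : g 0 = C (α ^ 2) * X ^ 2 * g 0 + C β * X * g 1)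
    (hQ : Q = C α * X * g 0)
    (hsupp : ∀ n i : ℕ, n < i → coeff n (f i) = 0 ∧ coeff n (g i) = 0) :
    (U * PowerSeries.mk (fun n => if Even n then f n else 0) =
      CC β * Zv * U ^ 2 * PowerSeries.mk (fun n => if Even n then 0 else f n)
        + CC α * Zv * PowerSeries.mk (fun n => if Even n then 0 else f n)
        + U * (1 + CC (β ^ 2) * Zv ^ 2 * CP (f 0))) ∧
    (U * PowerSeries.mk (fun n => if Even n then 0 else f n) =
      CC α * Zv * U ^ 2 * PowerSeries.mk (fun n => if Even n then f n else 0)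
        + CC β * Zv * (PowerSeries.mk (fun n => if Even n then f n else 0) - CP (f 0))
        + U ^ 2 * CC (α * β) * Zv ^ 2 * CP (g 0)) ∧
    (U * PowerSeries.mk (fun n => if Even n then g n else 0) =
      CC α * Zv * U ^ 2 * PowerSeries.mk (fun n => if Even n then 0 else g n)
        + CC β * Zv * PowerSeries.mk (fun n => if Even n then 0 else g n)
        + U * CC (α ^ 2) * Zv ^ 2 * CP (g 0)) ∧
    (U * PowerSeries.mk (fun n => if Even n then 0 else g n) =
      CC β * Zv * U ^ 2 * PowerSeries.mk (fun n => if Even n then g n else 0)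
        + CC α * Zv * (PowerSeries.mk (fun n => if Even n then g n else 0) - CP (g 0))
        + U ^ 2 * CC (α * β) * Zv ^ 2 * CP (f 0)) :=
  oneStep_four_equations_general α β f g hfe hfo hf1 hf0 hge hgo hg1 hg0
end
end

section
/- Let W ∈ ℝ[[z]] be the unique formal power series with constant term 1 satisfying W² = (1−z²)·(1−(1−2α)²·z²). Then the generating function f_0 of the one-step model satisfies, in ℝ[[z]]: 4α²z⁴·(z−1)·(z+1)·(α−1)²·(−1 + z² − 3z²α + 3z²α²)·f_0 = (−3z⁴α² + α²Wz² + 3z²α² + 3z⁴α − αWz² − 3z²α − z⁴ + Wz² + 2z² − 1 − W)·(2z²α² − 2z²α + z² − 1 + W). -/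
/-!
Write `s = αz`, `r = βz`. On even indices both `f` and `g` satisfy
`s r u_{k+2} + s r u_k = (1 - s² - r²) u_{k+1}`, whose characteristic equation
`s r λ² + s r = (1 - s² - r²) λ` has the power-series root `λ` given by
`W = 1 - s² - r² - 2 s r λ`. Since `z^k ∣ u_k`, the difference
`u₁ - λ u₀ = λ^m (u_{m+1} - λ u_m)` is divisible by every power of `z`, so `f₄ = λ f₂`,
`g₄ = λ g₂` and the system becomes finite. With `E = 1 - s² - r² - s r λ`, the relation
`s r λ E = (s r)²` collapses the elimination to
`(1 - z²)(1 - (1 - 3αβ) z²) f₀ = E - s r = (1 - z² + W) / 2`;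
the claimed identity is this one multiplied by `4 (s r)²`, rewritten with `W²`.
-/

open PowerSeries

section CommRing

variable {R : Type*} [CommRing R]

theorem even_recurrence_of_alternating {s r : R} {p : ℕ → R}
    (he : ∀ k, p (2 * k + 2) = r * p (2 * k + 1) + s * p (2 * k + 3))
    (ho : ∀ k, p (2 * k + 3) = s * p (2 * k + 2) + r * p (2 * k + 4)) (k : ℕ) :
    s * r * p (2 * k + 6) + s * r * p (2 * k + 2) = (1 - s ^ 2 - r ^ 2) * p (2 * k + 4) := by
  have h4 : p (2 * k + 4) = r * p (2 * k + 3) + s * p (2 * k + 5) := he (k + 1)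
  have h5 : p (2 * k + 5) = s * p (2 * k + 4) + r * p (2 * k + 6) := ho (k + 1)
  linear_combination -h4 - r * ho k - s * h5

theorem branch_elimination {s r l σ q : R} {p : ℕ → R}
    (hl : s * r * l ^ 2 + s * r = (1 - s ^ 2 - r ^ 2) * l)
    (h0 : p 0 = σ + r ^ 2 * p 0 + s * p 1) (h1 : p 1 = s * p 0 + r * p 2 + s * r * q)
    (h2 : p 2 = r * p 1 + s * p 3) (h3 : p 3 = s * p 2 + r * p 4) (h4 : p 4 = l * p 2) :
    (1 - s ^ 2 - r ^ 2 - s * r * l) ^ 2 * p 0 =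
      (1 - s ^ 2 - r ^ 2 - s * r * l) * σ + s ^ 2 * r * (1 - s ^ 2 - s * r * l) * q := by
  have hp2 : (1 - s ^ 2 - s * r * l) * p 2 = r * p 1 := by
    linear_combination h2 + s * h3 + s * r * h4
  have hp1 : (1 - s ^ 2 - r ^ 2 - s * r * l) * p 1 =
      (1 - s ^ 2 - s * r * l) * (s * p 0 + s * r * q) := by
    linear_combination (1 - s ^ 2 - s * r * l) * h1 + r * hp2
  linear_combination (1 - s ^ 2 - r ^ 2 - s * r * l) * h0 + s * hp1 + s * r * p 0 * hl

theorem coupled_system_solution [IsDomain R] {s r l : R} {f g : ℕ → R}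
    (hl : s * r * l ^ 2 + s * r = (1 - s ^ 2 - r ^ 2) * l)
    (hE : 1 - s ^ 2 - r ^ 2 - s * r * l ≠ 0)
    (hf0 : f 0 = 1 + r ^ 2 * f 0 + s * f 1) (hf1 : f 1 = s * f 0 + r * f 2 + s * r * g 0)
    (hf2 : f 2 = r * f 1 + s * f 3) (hf3 : f 3 = s * f 2 + r * f 4) (hf4 : f 4 = l * f 2)
    (hg0 : g 0 = s ^ 2 * g 0 + r * g 1) (hg1 : g 1 = r * g 0 + s * g 2 + r * s * f 0)
    (hg2 : g 2 = s * g 1 + r * g 3) (hg3 : g 3 = r * g 2 + s * g 4) (hg4 : g 4 = l * g 2) :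
    (1 - (s + r) ^ 2) * (1 - s ^ 2 - r ^ 2 + s * r) * f 0 =
      1 - s ^ 2 - r ^ 2 - s * r * l - s * r := by
  set E := 1 - s ^ 2 - r ^ 2 - s * r * l
  have hf := branch_elimination hl hf0 hf1 hf2 hf3 hf4
  -- the `g`-equations are the `f`-equations with `s` and `r` swapped and no source term
  have hg := branch_elimination (σ := 0) (by linear_combination hl) (by linear_combination hg0)
    hg1 hg2 hg3 hg4
  have hroot : s * r * l * E = (s * r) ^ 2 := by linear_combination -s * r * hl
  have hDfDg : (1 - s ^ 2 - s * r * l) * (1 - r ^ 2 - s * r * l) = E := by linear_combination -hroot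
  have hf_cube : (E ^ 3 - (s * r) ^ 3) * f 0 = E ^ 2 := by
    refine mul_left_cancel₀ hE ?_
    linear_combination E ^ 2 * hf + s ^ 2 * r * (1 - s ^ 2 - s * r * l) * hg
      + (s * r) ^ 3 * f 0 * hDfDg
  have hsq : (E - s * r) ^ 2 = E * (1 - (s + r) ^ 2) := by linear_combination -hroot
  have hcube : E ^ 3 - (s * r) ^ 3 = E * (E - s * r) * (1 - s ^ 2 - r ^ 2 + s * r) := by
    linear_combination -(E - s * r) * hroot
  refine mul_left_cancel₀ (pow_ne_zero 2 hE) ?_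
  linear_combination (E - s * r) * hf_cube - E * (1 - s ^ 2 - r ^ 2 + s * r) * f 0 * hsq
    - (E - s * r) * f 0 * hcube

end CommRing

section PowerSeries

variable {R : Type*} [CommRing R] [IsDomain R]

theorem eq_mul_of_recurrence_of_X_pow_dvd {c d l : R⟦X⟧} {u : ℕ → R⟦X⟧} (hc : c ≠ 0)
    (hrec : ∀ k, c * u (k + 2) + c * u k = d * u (k + 1)) (hl : c * l ^ 2 + c = d * l)
    (hdvd : ∀ k, X ^ k ∣ u k) : u 1 = l * u 0 := by
  have hstep : ∀ k, l * (u (k + 2) - l * u (k + 1)) = u (k + 1) - l * u k := fun k =>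
    mul_left_cancel₀ hc (by linear_combination l * hrec k - u (k + 1) * hl)
  have hiter : ∀ m, u 1 - l * u 0 = l ^ m * (u (m + 1) - l * u m) := by
    intro m
    induction m with
    | zero => simp
    | succ n ih => rw [ih, ← hstep n]; ring
  suffices h : u 1 - l * u 0 = 0 from sub_eq_zero.mp h
  ext n
  have hd : X ^ (n + 1) ∣ u 1 - l * u 0 := by
    rw [hiter (n + 1)]
    exact (dvd_sub ((pow_dvd_pow X (by omega)).trans (hdvd (n + 2)))
      ((hdvd (n + 1)).mul_left l)).mul_left _
  simpa using X_pow_dvd_iff.mp hd n (by omega)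

theorem eq_mul_of_alternating_recurrence {s r l : R⟦X⟧} {p : ℕ → R⟦X⟧}
    (hsr : s * r ≠ 0)
    (he : ∀ k, p (2 * k + 2) = r * p (2 * k + 1) + s * p (2 * k + 3))
    (ho : ∀ k, p (2 * k + 3) = s * p (2 * k + 2) + r * p (2 * k + 4))
    (hl : s * r * l ^ 2 + s * r = (1 - s ^ 2 - r ^ 2) * l) (hp : ∀ k, X ^ k ∣ p k) :
    p 4 = l * p 2 :=
  eq_mul_of_recurrence_of_X_pow_dvd (u := fun k => p (2 * k + 2)) hsr
    (even_recurrence_of_alternating he ho) hl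
    fun k => (pow_dvd_pow X (by omega)).trans (hp (2 * k + 2))

theorem X_sq_dvd_sub_one_of_X_sq_dvd_sq_sub_one (h2 : (2 : R) ≠ 0) {W : R⟦X⟧}
    (hW0 : constantCoeff W = 1) (hW : X ^ 2 ∣ W ^ 2 - 1) : X ^ 2 ∣ W - 1 := by
  obtain ⟨v, hv⟩ : X ∣ W - 1 := X_dvd_iff.mpr (by simp [hW0])
  have hXv : X ∣ v * (W + 1) := by
    rw [← mul_dvd_mul_iff_left (X_ne_zero (R := R)), ← pow_two, ← mul_assoc, ← hv]
    convert hW using 1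
    ring
  have hW1 : ¬ X ∣ W + 1 := by
    rwa [X_dvd_iff, map_add, hW0, map_one, one_add_one_eq_two]
  rw [pow_two, hv]
  exact mul_dvd_mul_left X ((X_prime.dvd_or_dvd hXv).resolve_right hW1)

end PowerSeries

theorem exists_quadratic_root_of_sq_eq {K : Type*} [Field K] (h2 : (2 : K) ≠ 0) {a b : K}
    (hab : a + b = 1) (ha : a ≠ 0) (hb : b ≠ 0) {W : K⟦X⟧} (hW0 : constantCoeff W = 1)
    (hW2 : W ^ 2 = (1 - X ^ 2) * (1 - C ((1 - 2 * a) ^ 2) * X ^ 2)) :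
    ∃ l : K⟦X⟧, W = 1 - (C a * X) ^ 2 - (C b * X) ^ 2 - 2 * (C a * X) * (C b * X) * l ∧
      C a * X * (C b * X) * l ^ 2 + C a * X * (C b * X) =
        (1 - (C a * X) ^ 2 - (C b * X) ^ 2) * l := by
  have hX : X = C a * X + C b * X := by rw [← add_mul, ← map_add, hab, map_one, one_mul]
  have hab' : C ((1 - 2 * a) ^ 2) * X ^ 2 = (C b * X - C a * X) ^ 2 := by
    rw [show 1 - 2 * a = b - a by linear_combination -hab]
    simp only [map_pow, map_sub]
    ring
  obtain ⟨w, hw⟩ : X ^ 2 ∣ W - 1 :=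
    X_sq_dvd_sub_one_of_X_sq_dvd_sq_sub_one h2 hW0
      ⟨C ((1 - 2 * a) ^ 2) * X ^ 2 - C ((1 - 2 * a) ^ 2) - 1, by rw [hW2]; ring⟩
  have hc : C (2 * a * b) * C (2 * a * b)⁻¹ = 1 := by
    rw [← map_mul, mul_inv_cancel₀ (by simp [h2, ha, hb]), map_one]
  simp only [map_mul, map_ofNat] at hc
  set l := -C (2 * a * b)⁻¹ * (w + C a ^ 2 + C b ^ 2)
  have hWl : W = 1 - (C a * X) ^ 2 - (C b * X) ^ 2 - 2 * (C a * X) * (C b * X) * l := by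
    linear_combination hw - X ^ 2 * (w + C a ^ 2 + C b ^ 2) * hc
  have h2' : (2 : K⟦X⟧) ≠ 0 := by
    rwa [← map_ofNat C 2, Ne, map_eq_zero_iff _ C_injective]
  refine ⟨l, hWl, mul_left_cancel₀ (?_ : 2 * 2 * (C a * X) * (C b * X) ≠ 0) ?_⟩
  · simp [h2', ha, hb, X_ne_zero]
  · linear_combination hW2
      - (W + 1 - (C a * X) ^ 2 - (C b * X) ^ 2 - 2 * (C a * X) * (C b * X) * l) * hWl
      - (1 - X ^ 2) * hab' - (1 - (C b * X - C a * X) ^ 2) * (X + C a * X + C b * X) * hX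

theorem oneStep_f0_explicit_general
    (α β : ℝ) (hα0 : 0 < α) (hα1 : α < 1) (hβ : β = 1 - α)
    (f g : ℕ → PowerSeries ℝ)
    (hfe : ∀ k : ℕ, f (2 * k + 2) = C β * X * f (2 * k + 1) + C α * X * f (2 * k + 3))
    (hfo : ∀ k : ℕ, f (2 * k + 3) = C α * X * f (2 * k + 2) + C β * X * f (2 * k + 4))
    (hf1 : f 1 = C α * X * f 0 + C β * X * f 2 + C (α * β) * X ^ 2 * g 0)
    (hf0 : f 0 = 1 + C (β ^ 2) * X ^ 2 * f 0 + C α * X * f 1)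
    (hge : ∀ k : ℕ, g (2 * k + 2) = C α * X * g (2 * k + 1) + C β * X * g (2 * k + 3))
    (hgo : ∀ k : ℕ, g (2 * k + 3) = C β * X * g (2 * k + 2) + C α * X * g (2 * k + 4))
    (hg1 : g 1 = C β * X * g 0 + C α * X * g 2 + C (α * β) * X ^ 2 * f 0)
    (hg0 : g 0 = C (α ^ 2) * X ^ 2 * g 0 + C β * X * g 1)
    (hsupp : ∀ n i : ℕ, n < i → coeff n (f i) = 0 ∧ coeff n (g i) = 0) (W : PowerSeries ℝ)
    (hW0 : constantCoeff W = 1)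
    (hW2 : W ^ 2 = (1 - X ^ 2) * (1 - C ((1 - 2 * α) ^ 2) * X ^ 2)) :
    C (4 * α ^ 2) * X ^ 4 * (X - 1) * (X + 1) * C ((α - 1) ^ 2)
        * (-1 + X ^ 2 - C (3 * α) * X ^ 2 + C (3 * α ^ 2) * X ^ 2) * f 0 =
      (-(C (3 * α ^ 2)) * X ^ 4 + C (α ^ 2) * W * X ^ 2 + C (3 * α ^ 2) * X ^ 2
          + C (3 * α) * X ^ 4 - C α * W * X ^ 2 - C (3 * α) * X ^ 2 - X ^ 4
          + W * X ^ 2 + 2 * X ^ 2 - 1 - W)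
        * (C (2 * α ^ 2) * X ^ 2 - C (2 * α) * X ^ 2 + X ^ 2 - 1 + W) := by
  subst hβ
  have hα : α ≠ 0 := hα0.ne'
  have hβ0 : 1 - α ≠ 0 := sub_ne_zero.mpr hα1.ne'
  obtain ⟨l, hWl, hl⟩ :=
    exists_quadratic_root_of_sq_eq two_ne_zero (add_sub_cancel α 1) hα hβ0 hW0 hW2
  have hCX : ∀ {c : ℝ}, c ≠ 0 → C c * X ≠ 0 := fun hc =>
    mul_ne_zero ((map_ne_zero_iff _ C_injective).mpr hc) X_ne_zero
  have hf4 : f 4 = l * f 2 := eq_mul_of_alternating_recurrence (mul_ne_zero (hCX hα) (hCX hβ0))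
    hfe hfo hl fun i => X_pow_dvd_iff.mpr fun m hm => (hsupp m i hm).1
  have hg4 : g 4 = l * g 2 := eq_mul_of_alternating_recurrence (mul_ne_zero (hCX hβ0) (hCX hα))
    hge hgo (by linear_combination hl) fun i => X_pow_dvd_iff.mpr fun m hm => (hsupp m i hm).2
  have hE : 1 - (C α * X) ^ 2 - (C (1 - α) * X) ^ 2 - C α * X * (C (1 - α) * X) * l ≠ 0 :=
    fun h => by simpa using congrArg constantCoeff h
  simp only [map_mul, map_pow] at hf0 hf1 hg0 hg1
  have key := coupled_system_solution hl hE (by linear_combination hf0)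
    (by linear_combination hf1) (hfe 0) (hfo 0) hf4 (by linear_combination hg0)
    (by linear_combination hg1) (hge 0) (hgo 0) hg4
  simp only [map_mul, map_pow, map_sub, map_one, map_ofNat] at key hWl hW2 ⊢
  linear_combination 4 * (C α * X * ((1 - C α) * X)) ^ 2 * key
    - 2 * (C α * X * ((1 - C α) * X)) ^ 2 * hWl
    + (1 - (C α * X) ^ 2 - ((1 - C α) * X) ^ 2 - C α * X * ((1 - C α) * X)) * hW2

/-- Explicit algebraic equation for `f₀` in the one-step model, involving the square
root series `W` of `(1-z²)(1-(1-2α)²z²)`. -/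
theorem oneStep_f0_explicit
    (α β : ℝ) (hα0 : 0 < α) (hα1 : α < 1) (hβ : β = 1 - α)
    (f g : ℕ → PowerSeries ℝ) (P Q : PowerSeries ℝ)
    (hfe : ∀ k : ℕ, f (2 * k + 2) = C β * X * f (2 * k + 1) + C α * X * f (2 * k + 3))
    (hfo : ∀ k : ℕ, f (2 * k + 3) = C α * X * f (2 * k + 2) + C β * X * f (2 * k + 4))
    (hf1 : f 1 = C α * X * f 0 + C β * X * f 2 + C (α * β) * X ^ 2 * g 0)
    (hf0 : f 0 = 1 + C (β ^ 2) * X ^ 2 * f 0 + C α * X * f 1)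
    (hP : P = C β * X * f 0)
    (hge : ∀ k : ℕ, g (2 * k + 2) = C α * X * g (2 * k + 1) + C β * X * g (2 * k + 3))
    (hgo : ∀ k : ℕ, g (2 * k + 3) = C β * X * g (2 * k + 2) + C α * X * g (2 * k + 4))
    (hg1 : g 1 = C β * X * g 0 + C α * X * g 2 + C (α * β) * X ^ 2 * f 0)
    (hg0 : g 0 = C (α ^ 2) * X ^ 2 * g 0 + C β * X * g 1)
    (hQ : Q = C α * X * g 0)
    (hsupp : ∀ n i : ℕ, n < i → coeff n (f i) = 0 ∧ coeff n (g i) = 0) (W : PowerSeries ℝ)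
    (hW0 : constantCoeff W = 1)
    (hW2 : W ^ 2 = (1 - X ^ 2) * (1 - C ((1 - 2 * α) ^ 2) * X ^ 2)) :
    C (4 * α ^ 2) * X ^ 4 * (X - 1) * (X + 1) * C ((α - 1) ^ 2)
        * (-1 + X ^ 2 - C (3 * α) * X ^ 2 + C (3 * α ^ 2) * X ^ 2) * f 0 =
      (-(C (3 * α ^ 2)) * X ^ 4 + C (α ^ 2) * W * X ^ 2 + C (3 * α ^ 2) * X ^ 2
          + C (3 * α) * X ^ 4 - C α * W * X ^ 2 - C (3 * α) * X ^ 2 - X ^ 4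
          + W * X ^ 2 + 2 * X ^ 2 - 1 - W)
        * (C (2 * α ^ 2) * X ^ 2 - C (2 * α) * X ^ 2 + X ^ 2 - 1 + W) :=
  oneStep_f0_explicit_general α β hα0 hα1 hβ f g hfe hfo hf1 hf0 hge hgo hg1 hg0 hsupp W hW0 hW2
end
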